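/- Suppose the k-dimensional random vector Z satisfies Assumption (A), let τ ∈ (0,1), u ∈ S^{k−1}, and let (a_τ, c_τ) be the unique minimizer of Ψ^c_{τu}(a,c) := E[ρ_τ(c'Z − a)] over M_u := {(a,c) : u'c = 1}. Set λ_τ := E[ρ_τ(c_τ'Z − a_τ)] (the minimal value) and write H^−_τ := {z : c_τ'z < a_τ}, H^+_τ := {z : c_τ'z ≥ a_τ}. Then (1/(1−τ)) E[Z·1_{Z ∈ H^+_τ}] − (1/τ) E[Z·1_{Z ∈ H^−_τ}] = (λ_τ / (τ(1−τ))) · u. -/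

import Mathlib

open MeasureTheory Matrix ENNReal

/-- The quantile check function `ρ_τ`. -/
noncomputable def rho (τ x : ℝ) : ℝ := x * (τ - if x < 0 then 1 else 0)

/-- Assumption (A): absolutely continuous distribution with a density whose support is
connected, and finite first-order moments. -/
def AssumptionA {k : ℕ} (μ : Measure (Fin (k + 1) → ℝ)) : Prop :=
  IsProbabilityMeasure μ ∧
    (∃ f : (Fin (k + 1) → ℝ) → ℝ, Measurable f ∧ (∀ z, 0 ≤ f z) ∧
      μ = volume.withDensity (fun z => ENNReal.ofReal (f z)) ∧
      IsConnected (Function.support f)) ∧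
    Integrable (fun z : Fin (k + 1) → ℝ => z) μ

/-- The constrained-form objective `Ψ^c_{τu}(a, c) = E[ρ_τ(c'Z − a)]`. -/
noncomputable def PsiC {k : ℕ} (μ : Measure (Fin (k + 1) → ℝ)) (τ : ℝ)
    (a : ℝ) (c : Fin (k + 1) → ℝ) : ℝ :=
  ∫ z, rho τ (c ⬝ᵥ z - a) ∂μ

/-! Write `s(z) = τ - 1{c ⬝ z < a}`. Minimality of `(a, c)` along each admissible line
`t ↦ (a + t α, c + t v)` with `u ⬝ v = 0` gives the first-order condition
`E[(v ⬝ Z - α) s(Z)] = 0`: one may differentiate under the integral because `ρ_τ` is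
1-Lipschitz and, by absolute continuity, `c ⬝ Z ≠ a` almost surely. Taking `v = 0` gives
`E[s(Z)] = 0`; taking `α = 0` shows that `m = E[s(Z) Z]` is orthogonal to `u⊥`, hence
`m = (c ⬝ m) u` as `u ⬝ c = 1`. Since `ρ_τ(x) = x s`, the minimal value is
`E[(c ⬝ Z - a) s(Z)] = c ⬝ m`, and splitting `s` over the two half-spaces gives
`m = τ E[Z 1{H⁺}] - (1 - τ) E[Z 1{H⁻}]`. -/

/-- The derivative of `rho τ` away from `0`; at `0` it is the right derivative. -/
noncomputable def rhoDeriv (τ x : ℝ) : ℝ := τ - if x < 0 then 1 else 0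

lemma rho_eq_mul_rhoDeriv (τ x : ℝ) : rho τ x = x * rhoDeriv τ x := rfl

lemma rho_eq_max (τ x : ℝ) : rho τ x = max (τ * x) ((τ - 1) * x) := by
  rcases lt_or_ge x 0 with hx | hx
  · rw [rho, if_pos hx, max_eq_right (by nlinarith)]; ring
  · rw [rho, if_neg hx.not_gt, max_eq_left (by nlinarith)]; ring

lemma lipschitzWith_rho {τ : ℝ} (hτ0 : 0 ≤ τ) (hτ1 : τ ≤ 1) : LipschitzWith 1 (rho τ) := by
  refine LipschitzWith.of_dist_le_mul fun x y => ?_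
  simp only [NNReal.coe_one, one_mul, Real.dist_eq, rho_eq_max]
  refine (abs_max_sub_max_le_max _ _ _ _).trans (max_le ?_ ?_)
  · rw [← mul_sub, abs_mul, abs_of_nonneg hτ0]
    nlinarith [abs_nonneg (x - y)]
  · rw [← mul_sub, abs_mul, abs_of_nonpos (by linarith)]
    nlinarith [abs_nonneg (x - y)]

lemma abs_rhoDeriv_le_one {τ : ℝ} (hτ0 : 0 ≤ τ) (hτ1 : τ ≤ 1) (x : ℝ) : |rhoDeriv τ x| ≤ 1 := by
  rw [rhoDeriv, abs_le]
  split_ifs <;> constructor <;> linarith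

lemma measurable_rhoDeriv (τ : ℝ) : Measurable (rhoDeriv τ) :=
  measurable_const.sub <|
    Measurable.ite measurableSet_Iio measurable_const measurable_const

lemma hasDerivAt_rho {τ x : ℝ} (hx : x ≠ 0) : HasDerivAt (rho τ) (rhoDeriv τ x) x := by
  have hlin : HasDerivAt (fun y => y * rhoDeriv τ x) (rhoDeriv τ x) x := by
    simpa using (hasDerivAt_id x).mul_const (rhoDeriv τ x)
  refine hlin.congr_of_eventuallyEq ?_
  rcases hx.lt_or_gt with hneg | hpos
  · filter_upwards [Iio_mem_nhds hneg] with y (hy : y < 0)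
    simp only [rho_eq_mul_rhoDeriv, rhoDeriv, if_pos hy, if_pos hneg]
  · filter_upwards [Ioi_mem_nhds hpos] with y (hy : 0 < y)
    simp only [rho_eq_mul_rhoDeriv, rhoDeriv, if_neg hy.not_gt, if_neg hpos.not_gt]

section FirstOrder

variable {α : Type*} [MeasurableSpace α] {μ : Measure α}

theorem integral_mul_rhoDeriv_eq_zero_of_isLocalMin {τ : ℝ} (hτ0 : 0 ≤ τ) (hτ1 : τ ≤ 1)
    {g h : α → ℝ} (hg : Integrable g μ) (hh : Integrable h μ) (hg0 : ∀ᵐ x ∂μ, g x ≠ 0)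
    (hmin : IsLocalMin (fun t => ∫ x, rho τ (g x + t * h x) ∂μ) 0) :
    ∫ x, h x * rhoDeriv τ (g x) ∂μ = 0 := by
  have hlip := lipschitzWith_rho hτ0 hτ1
  have hmeas : ∀ t : ℝ, AEStronglyMeasurable (fun x => rho τ (g x + t * h x)) μ := fun t =>
    hlip.continuous.comp_aestronglyMeasurable (hg.1.add (hh.1.const_mul t))
  have hderiv := hasDerivAt_integral_of_dominated_loc_of_lip (bound := fun x => |h x|)
    (F' := fun x => h x * rhoDeriv τ (g x)) (x₀ := (0 : ℝ)) (μ := μ) Filter.univ_mem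
    (Filter.Eventually.of_forall hmeas) ?int
    (hh.1.mul ((measurable_rhoDeriv τ).comp_aemeasurable hg.1.aemeasurable).aestronglyMeasurable)
    ?lip hh.abs ?diff
  · exact hmin.hasDerivAt_eq_zero hderiv.2
  case int =>
    refine hg.norm.mono' (hmeas 0) (Filter.Eventually.of_forall fun x => ?_)
    simpa [rho] using hlip.dist_le_mul (g x) 0
  case lip =>
    refine Filter.Eventually.of_forall fun x =>
      (LipschitzWith.of_dist_le_mul fun t t' => ?_).lipschitzOnWith
    calc dist (rho τ (g x + t * h x)) (rho τ (g x + t' * h x))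
        ≤ dist (g x + t * h x) (g x + t' * h x) := by
          simpa only [NNReal.coe_one, one_mul] using hlip.dist_le_mul _ _
      _ = |h x| * dist t t' := by
        rw [Real.dist_eq, Real.dist_eq, ← abs_mul]; ring_nf
      _ = Real.nnabs |h x| * dist t t' := by rw [Real.coe_nnabs, abs_abs]
  case diff =>
    filter_upwards [hg0] with x hx
    have hline : HasDerivAt (fun t : ℝ => g x + t * h x) (h x) 0 := by
      simpa using ((hasDerivAt_id (0 : ℝ)).mul_const (h x)).const_add (g x)
    rw [mul_comm]
    exact (hasDerivAt_rho hx).comp_of_eq 0 hline (by simp)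

end FirstOrder

theorem MeasureTheory.Measure.addHaar_preimage_linearMap_singleton {E F : Type*}
    [NormedAddCommGroup E] [NormedSpace ℝ E] [MeasurableSpace E] [BorelSpace E]
    [FiniteDimensional ℝ E] [AddCommGroup F] [Module ℝ F] (μ : Measure E) [μ.IsAddHaarMeasure]
    {L : E →ₗ[ℝ] F} (hL : L ≠ 0) (y : F) : μ (L ⁻¹' {y}) = 0 := by
  rcases (L ⁻¹' {y}).eq_empty_or_nonempty with hempty | ⟨x₀, hx₀⟩
  · rw [hempty, measure_empty]
  have hfiber : L ⁻¹' {y} = (· + -x₀) ⁻¹' (LinearMap.ker L : Set E) := by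
    ext x
    simp_all [sub_eq_zero, ← sub_eq_add_neg]
  rw [hfiber, measure_preimage_add_right]
  exact Measure.addHaar_submodule μ _ (by rwa [Ne, LinearMap.ker_eq_top])

theorem volume_setOf_dotProduct_eq {ι : Type*} [Fintype ι] {c : ι → ℝ} (hc : c ≠ 0) (a : ℝ) :
    volume {z : ι → ℝ | c ⬝ᵥ z = a} = 0 :=
  Measure.addHaar_preimage_linearMap_singleton volume (L := dotProductBilin ℝ ℝ c)
    (fun h => hc (by simpa using LinearMap.congr_fun h c)) a

theorem dotProduct_integral {α ι : Type*} [MeasurableSpace α] {μ : Measure α} [Fintype ι]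
    (w : ι → ℝ) {f : α → ι → ℝ} (hf : Integrable f μ) :
    w ⬝ᵥ ∫ x, f x ∂μ = ∫ x, w ⬝ᵥ f x ∂μ :=
  ((dotProductBilin ℝ ℝ w).toContinuousLinearMap.integral_comp_comm hf).symm

theorem MeasureTheory.Integrable.const_dotProduct {α ι : Type*} [MeasurableSpace α] {μ : Measure α}
    [Fintype ι] (w : ι → ℝ) {f : α → ι → ℝ} (hf : Integrable f μ) :
    Integrable (fun x => w ⬝ᵥ f x) μ :=
  (dotProductBilin ℝ ℝ w).toContinuousLinearMap.integrable_comp hf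

theorem eq_smul_of_forall_dotProduct_eq_zero {R ι : Type*} [CommRing R] [Fintype ι]
    {u c m : ι → R} (hc : u ⬝ᵥ c = 1) (horth : ∀ v, u ⬝ᵥ v = 0 → v ⬝ᵥ m = 0) :
    m = (c ⬝ᵥ m) • u := by
  refine dotProduct_eq _ _ fun w => ?_
  have hw := horth (w - (u ⬝ᵥ w) • c) (by simp [dotProduct_sub, hc])
  rw [sub_dotProduct, smul_dotProduct, smul_eq_mul, sub_eq_zero] at hw
  rw [dotProduct_comm, hw, smul_dotProduct, smul_eq_mul, dotProduct_comm u w, mul_comm]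

section Quantile

variable {α : Type*} [MeasurableSpace α] {μ : Measure α} {τ : ℝ}

theorem MeasureTheory.Integrable.rhoDeriv_smul {E : Type*} [NormedAddCommGroup E] [NormedSpace ℝ E]
    (hτ0 : 0 ≤ τ) (hτ1 : τ ≤ 1) {g : α → ℝ} {f : α → E} (hg : AEMeasurable g μ)
    (hf : Integrable f μ) : Integrable (fun x => rhoDeriv τ (g x) • f x) μ :=
  hf.bdd_smul 1 ((measurable_rhoDeriv τ).comp_aemeasurable hg).aestronglyMeasurable
    (Filter.Eventually.of_forall fun x => abs_rhoDeriv_le_one hτ0 hτ1 (g x))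

theorem integral_rhoDeriv_sub_smul {E : Type*} [NormedAddCommGroup E] [NormedSpace ℝ E]
    (a : ℝ) {g : α → ℝ} {f : α → E} (hg : Measurable g) (hf : Integrable f μ) :
    ∫ x, rhoDeriv τ (g x - a) • f x ∂μ =
      τ • ∫ x, {x | a ≤ g x}.indicator f x ∂μ - (1 - τ) • ∫ x, {x | g x < a}.indicator f x ∂μ := by
  have hpoint : ∀ x, rhoDeriv τ (g x - a) • f x =
      τ • {x | a ≤ g x}.indicator f x - (1 - τ) • {x | g x < a}.indicator f x := by
    intro x
    by_cases hx : g x < a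
    · simp only [rhoDeriv, if_pos (sub_neg.2 hx),
        Set.indicator_of_mem (show x ∈ {x | g x < a} from hx),
        Set.indicator_of_notMem (show x ∉ {x | a ≤ g x} from hx.not_ge), smul_zero, zero_sub,
        ← neg_smul, neg_sub]
    · simp only [rhoDeriv, if_neg (sub_nonneg.2 (not_lt.1 hx)).not_gt, sub_zero,
        Set.indicator_of_mem (show x ∈ {x | a ≤ g x} from not_lt.1 hx),
        Set.indicator_of_notMem (show x ∉ {x | g x < a} from hx), smul_zero, sub_zero]
  have hpos : Integrable (fun x => τ • {x | a ≤ g x}.indicator f x) μ :=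
    (hf.indicator (measurableSet_le measurable_const hg)).smul τ
  have hneg : Integrable (fun x => (1 - τ) • {x | g x < a}.indicator f x) μ :=
    (hf.indicator (measurableSet_lt hg measurable_const)).smul (1 - τ)
  rw [integral_congr_ae (Filter.Eventually.of_forall hpoint), integral_sub hpos hneg,
    integral_smul, integral_smul]

end Quantile

section PsiC

variable {k : ℕ} {μ : Measure (Fin (k + 1) → ℝ)} [IsFiniteMeasure μ] {τ a : ℝ}
  {c : Fin (k + 1) → ℝ}

theorem integral_mul_rhoDeriv_eq_zero_of_PsiC_le (hτ0 : 0 ≤ τ) (hτ1 : τ ≤ 1)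
    (hZ : Integrable (fun z => z) μ) (hnull : ∀ᵐ z ∂μ, c ⬝ᵥ z ≠ a) {u : Fin (k + 1) → ℝ}
    (hc : u ⬝ᵥ c = 1)
    (hmin : ∀ a' : ℝ, ∀ c' : Fin (k + 1) → ℝ, u ⬝ᵥ c' = 1 → PsiC μ τ a c ≤ PsiC μ τ a' c')
    (α : ℝ) {v : Fin (k + 1) → ℝ} (hv : u ⬝ᵥ v = 0) :
    ∫ z, (v ⬝ᵥ z - α) * rhoDeriv τ (c ⬝ᵥ z - a) ∂μ = 0 := by
  have hline : ∀ t : ℝ, ∫ z, rho τ ((c ⬝ᵥ z - a) + t * (v ⬝ᵥ z - α)) ∂μ =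
      PsiC μ τ (a + t * α) (c + t • v) := fun t => by
    simp only [PsiC, add_dotProduct, smul_dotProduct, smul_eq_mul]
    congr 1 with z
    ring_nf
  refine integral_mul_rhoDeriv_eq_zero_of_isLocalMin hτ0 hτ1
    ((hZ.const_dotProduct c).sub (integrable_const a))
    ((hZ.const_dotProduct v).sub (integrable_const α))
    (by simpa only [Ne, sub_eq_zero] using hnull) (Filter.Eventually.of_forall fun t => ?_)
  simp only [hline, zero_mul, add_zero]
  exact hmin _ _ (by rw [dotProduct_add, dotProduct_smul, hc, hv, smul_zero, add_zero])

theorem PsiC_eq_dotProduct_integral (hτ0 : 0 ≤ τ) (hτ1 : τ ≤ 1)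
    (hZ : Integrable (fun z => z) μ) (hmean : ∫ z, rhoDeriv τ (c ⬝ᵥ z - a) ∂μ = 0) :
    PsiC μ τ a c = c ⬝ᵥ ∫ z, rhoDeriv τ (c ⬝ᵥ z - a) • z ∂μ := by
  have hg : AEMeasurable (fun z => c ⬝ᵥ z - a) μ := by fun_prop
  have hlin : Integrable (fun z => rhoDeriv τ (c ⬝ᵥ z - a) * (c ⬝ᵥ z)) μ :=
    (hZ.const_dotProduct c).rhoDeriv_smul hτ0 hτ1 hg
  have hconst : Integrable (fun z => a * rhoDeriv τ (c ⬝ᵥ z - a)) μ := by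
    simpa using ((integrable_const (1 : ℝ)).rhoDeriv_smul hτ0 hτ1 hg).const_mul a
  rw [dotProduct_integral c (hZ.rhoDeriv_smul hτ0 hτ1 hg), PsiC]
  calc ∫ z, rho τ (c ⬝ᵥ z - a) ∂μ
      = ∫ z, rhoDeriv τ (c ⬝ᵥ z - a) * (c ⬝ᵥ z) - a * rhoDeriv τ (c ⬝ᵥ z - a) ∂μ := by
        congr 1 with z
        rw [rho_eq_mul_rhoDeriv]
        ring
    _ = ∫ z, c ⬝ᵥ (rhoDeriv τ (c ⬝ᵥ z - a) • z) ∂μ := by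
        rw [integral_sub hlin hconst, integral_const_mul, hmean, mul_zero, sub_zero]
        simp only [dotProduct_smul, smul_eq_mul]

end PsiC

theorem stmt5_general {k : ℕ} (μ : Measure (Fin (k + 1) → ℝ))
    (hA : AssumptionA μ) (τ : ℝ) (hτ : τ ∈ Set.Ioo (0:ℝ) 1)
    (u : Fin (k + 1) → ℝ)
    (a : ℝ) (c : Fin (k + 1) → ℝ) (hc : u ⬝ᵥ c = 1)
    (hmin : ∀ a' : ℝ, ∀ c' : Fin (k + 1) → ℝ, u ⬝ᵥ c' = 1 → PsiC μ τ a c ≤ PsiC μ τ a' c') :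
    (1 / (1 - τ)) • (∫ z, Set.indicator {z | a ≤ c ⬝ᵥ z} (fun z => z) z ∂μ) -
      (1 / τ) • (∫ z, Set.indicator {z | c ⬝ᵥ z < a} (fun z => z) z ∂μ) =
    (PsiC μ τ a c / (τ * (1 - τ))) • u := by
  obtain ⟨hτ0, hτ1⟩ := hτ
  obtain ⟨hprob, ⟨f, -, -, hμ, -⟩, hZ⟩ := hA
  have hc0 : c ≠ 0 := by
    rintro rfl
    simp at hc
  have hnull : ∀ᵐ z ∂μ, c ⬝ᵥ z ≠ a := by
    simpa only [ae_iff, not_not, hμ] using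
      withDensity_absolutelyContinuous _ _ (volume_setOf_dotProduct_eq hc0 a)
  have hfoc := integral_mul_rhoDeriv_eq_zero_of_PsiC_le hτ0.le hτ1.le hZ hnull hc hmin
  set m := ∫ z, rhoDeriv τ (c ⬝ᵥ z - a) • z ∂μ
  have hmean : ∫ z, rhoDeriv τ (c ⬝ᵥ z - a) ∂μ = 0 := by
    simpa using hfoc (-1) (dotProduct_zero u)
  have horth : ∀ v, u ⬝ᵥ v = 0 → v ⬝ᵥ m = 0 := fun v hv => by
    rw [dotProduct_integral v (hZ.rhoDeriv_smul hτ0.le hτ1.le (by fun_prop))]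
    simpa [dotProduct_smul, mul_comm] using hfoc 0 hv
  have hm : m = PsiC μ τ a c • u := by
    rw [PsiC_eq_dotProduct_integral hτ0.le hτ1.le hZ hmean]
    exact eq_smul_of_forall_dotProduct_eq_zero hc horth
  have hsplit : m = τ • (∫ z, Set.indicator {z | a ≤ c ⬝ᵥ z} (fun z => z) z ∂μ) -
      (1 - τ) • (∫ z, Set.indicator {z | c ⬝ᵥ z < a} (fun z => z) z ∂μ) :=
    integral_rhoDeriv_sub_smul a (g := fun z => c ⬝ᵥ z) (by fun_prop) hZ
  calc _ = (τ * (1 - τ))⁻¹ • m := by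
        rw [hsplit, smul_sub, smul_smul, smul_smul]
        congr 2 <;> field_simp [hτ0.ne', (sub_pos.2 hτ1).ne']
    _ = (PsiC μ τ a c / (τ * (1 - τ))) • u := by
        rw [hm, smul_smul, div_eq_inv_mul]

theorem stmt5 {k : ℕ} (μ : Measure (Fin (k + 1) → ℝ))
    (hA : AssumptionA μ) (τ : ℝ) (hτ : τ ∈ Set.Ioo (0:ℝ) 1)
    (u : Fin (k + 1) → ℝ) (hu : ∑ i, u i ^ 2 = 1)
    (a : ℝ) (c : Fin (k + 1) → ℝ) (hc : u ⬝ᵥ c = 1)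
    (hmin : ∀ a' : ℝ, ∀ c' : Fin (k + 1) → ℝ, u ⬝ᵥ c' = 1 → PsiC μ τ a c ≤ PsiC μ τ a' c') :
    (1 / (1 - τ)) • (∫ z, Set.indicator {z | a ≤ c ⬝ᵥ z} (fun z => z) z ∂μ) -
      (1 / τ) • (∫ z, Set.indicator {z | c ⬝ᵥ z < a} (fun z => z) z ∂μ) =
    (PsiC μ τ a c / (τ * (1 - τ))) • u :=
  stmt5_general μ hA τ hτ u a c hc hmin
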